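/- Linearly-extendible families are ideal families: Let F be a field and 𝓛 = (L_0,…,L_{s−1}) a linearly-extendible bivariate family of linear operators. Then for every point (x,y) ∈ F×F, the set I^{(x,y)}(𝓛) = {p ∈ F[X,Y] : L_i(p)(x,y) = 0 for all i ∈ {0,…,s−1}} is an ideal of the ring F[X,Y]. -/

import Mathlib

open MvPolynomial

noncomputable section

/-- A bivariate family of linear operators is linearly-extendible, witnessed by
matrices `Mx`, `My` over `F[X,Y]`. -/
def LinExt (F : Type) [Field F] (s : ℕ)
    (L : Fin s → MvPolynomial (Fin 2) F →ₗ[F] MvPolynomial (Fin 2) F)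
    (Mx My : Matrix (Fin s) (Fin s) (MvPolynomial (Fin 2) F)) : Prop :=
  (∀ p, (fun i => L i (X 0 * p)) = Mx.mulVec fun i => L i p) ∧
  (∀ p, (fun i => L i (X 1 * p)) = My.mulVec fun i => L i p)

/-!
The set `I` of common zeros of `φ ∘ L i` (with `φ` evaluation at a point) is a linear
subspace, so it is an ideal as soon as it is stable under multiplication by the generators `X`
and `Y` of the algebra. If `𝓛(X p) = M 𝓛(p)`, then evaluating at the point gives
`φ(𝓛(X p)) = φ(M) φ(𝓛(p))`, which vanishes whenever `φ(𝓛(p))` does.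
-/

section

variable {R A B ι : Type*} [CommSemiring R] [CommSemiring A] [Algebra R A]
  [CommSemiring B] [Algebra R B]

theorem Submodule.mul_mem_of_adjoin_eq_top (S : Submodule R A) {s : Set A}
    (hs : Algebra.adjoin R s = ⊤) (hS : ∀ x ∈ s, ∀ p ∈ S, x * p ∈ S) (a : A) {p : A}
    (hp : p ∈ S) : a * p ∈ S := by
  have ha : a ∈ Algebra.adjoin R s := hs ▸ Algebra.mem_top
  induction ha using Algebra.adjoin_induction generalizing p with
  | mem x hx => exact hS x hx p hp
  | algebraMap r => simpa only [← Algebra.smul_def] using S.smul_mem r hp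
  | add x y _ _ hx hy => simpa only [add_mul] using S.add_mem (hx hp) (hy hp)
  | mul x y _ _ hx hy => simpa only [mul_assoc] using hx (hy hp)

def commonZeros (L : ι → A →ₗ[R] A) (φ : A →ₐ[R] B) : Submodule R A :=
  ⨅ i, LinearMap.ker (φ.toLinearMap ∘ₗ L i)

theorem mem_commonZeros {L : ι → A →ₗ[R] A} {φ : A →ₐ[R] B} {p : A} :
    p ∈ commonZeros L φ ↔ ∀ i, φ (L i p) = 0 := by
  simp only [commonZeros, Submodule.mem_iInf, LinearMap.mem_ker, LinearMap.comp_apply,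
    AlgHom.toLinearMap_apply]

theorem mul_mem_commonZeros_of_mulVec [Fintype ι] {L : ι → A →ₗ[R] A} {φ : A →ₐ[R] B}
    {x : A} {M : Matrix ι ι A} (hM : ∀ p, (fun i => L i (x * p)) = M.mulVec fun i => L i p)
    {p : A} (hp : p ∈ commonZeros L φ) : x * p ∈ commonZeros L φ := by
  have hφp : (φ : A →+* B) ∘ (fun i => L i p) = 0 := funext (mem_commonZeros.mp hp)
  refine mem_commonZeros.mpr fun i => ?_
  rw [congrFun (hM p) i]
  have h := RingHom.map_mulVec (φ : A →+* B) M (fun i => L i p) i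
  rwa [hφp, Matrix.mulVec_zero] at h

end

/-- Linearly-extendible families are ideal families: for every point `(x,y)`, the
set `I^{(x,y)}(𝓛) = {p : ∀ i, L_i(p)(x,y) = 0}` is an ideal of `F[X,Y]`. -/
theorem linearly_extendible_is_ideal_family
    {F : Type} [Field F] {s : ℕ}
    (L : Fin s → MvPolynomial (Fin 2) F →ₗ[F] MvPolynomial (Fin 2) F)
    (Mx My : Matrix (Fin s) (Fin s) (MvPolynomial (Fin 2) F))
    (hext : LinExt F s L Mx My) :
    ∀ x y : F, ∃ I : Ideal (MvPolynomial (Fin 2) F),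
      ∀ p : MvPolynomial (Fin 2) F,
        p ∈ I ↔ ∀ i : Fin s, eval ![x, y] (L i p) = 0 := by
  intro x y
  let S := commonZeros L (aeval ![x, y])
  have hX : ∀ n, ∀ p ∈ S, X n * p ∈ S := by
    rw [Fin.forall_fin_two]
    exact ⟨fun _ => mul_mem_commonZeros_of_mulVec hext.1,
      fun _ => mul_mem_commonZeros_of_mulVec hext.2⟩
  -- `aeval ![x, y]` and `eval ![x, y]` agree definitionally (`coe_aeval_eq_eval`).
  exact ⟨{ S with
    smul_mem' := fun a _ hp => S.mul_mem_of_adjoin_eq_top adjoin_range_X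
      (by rintro _ ⟨n, rfl⟩; exact hX n) a hp }, fun _ => mem_commonZeros⟩
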